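/- Let B be a bounded operator on a complex Hilbert space K satisfying B² = 0. Then B has closed range equal to ker B if and only if the self-adjoint operator D = B + B* is invertible in B(K). Consequently, a commuting d-tuple T̄ = (T₁,…,T_d) of bounded operators on H is Taylor invertible (i.e., the range of the Koszul coboundary B = T₁⊗c₁ + … + T_d⊗c_d on H⊗Λℂ^d equals ker B) if and only if its Dirac operator D = B + B* is invertible in B(H⊗Λℂ^d). -/

import Mathlib

noncomputable section
open ContinuousLinearMap

abbrev Fock (d : ℕ) := EuclideanSpace ℂ (Finset (Fin d))

def createL (d : ℕ) (k : Fin d) : Fock d →ₗ[ℂ] Fock d where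
  toFun f := WithLp.toLp 2 fun (S : Finset (Fin d)) =>
    if k ∈ S then ((-1 : ℂ) ^ (S.filter (fun j => j < k)).card) * f (S.erase k) else 0
  map_add' f g := by
    ext S; by_cases h : k ∈ S <;> simp [h, PiLp.add_apply, mul_add]
  map_smul' c f := by
    ext S; by_cases h : k ∈ S <;> simp [h, PiLp.smul_apply, smul_eq_mul] <;> ring

def create (d : ℕ) (k : Fin d) : Fock d →L[ℂ] Fock d :=
  LinearMap.toContinuousLinearMap (createL d k)

def C0 (d : ℕ) : EuclideanSpace ℂ (Fin d) →ₗ[ℂ] (Fock d →L[ℂ] Fock d) where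
  toFun z := ∑ k, z k • create d k
  map_add' z w := by
    rw [← Finset.sum_add_distrib]
    exact Finset.sum_congr rfl fun k _ => add_smul (z k : ℂ) (w k) (create d k)
  map_smul' c z := by
    show ∑ k, (c • z) k • create d k = c • ∑ k, z k • create d k
    rw [Finset.smul_sum]
    refine Finset.sum_congr rfl fun k _ => ?_
    rw [PiLp.smul_apply, smul_eq_mul, smul_smul]

abbrev FockH (H : Type*) [NormedAddCommGroup H] [InnerProductSpace ℂ H] (d : ℕ) :=
  PiLp 2 (fun _ : Finset (Fin d) => H)

def tensorOp {H : Type*} [NormedAddCommGroup H] [InnerProductSpace ℂ H] {d : ℕ}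
    (T : H →L[ℂ] H) (A : Fock d →L[ℂ] Fock d) : FockH H d →L[ℂ] FockH H d :=
  ((PiLp.continuousLinearEquiv 2 ℂ (fun _ : Finset (Fin d) => H)).symm :
      (∀ _ : Finset (Fin d), H) →L[ℂ] FockH H d) ∘L
    (ContinuousLinearMap.pi fun S : Finset (Fin d) =>
      ∑ S' : Finset (Fin d), (A (EuclideanSpace.single S' 1) S) •
        (T ∘L ContinuousLinearMap.proj S')) ∘L
    ((PiLp.continuousLinearEquiv 2 ℂ (fun _ : Finset (Fin d) => H)) :
      FockH H d →L[ℂ] (∀ _ : Finset (Fin d), H))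

variable {H : Type*} [NormedAddCommGroup H] [InnerProductSpace ℂ H] [CompleteSpace H]

instance fockHComplete {d : ℕ} : CompleteSpace (FockH H d) :=
  inferInstanceAs (CompleteSpace (PiLp 2 (fun _ : Finset (Fin d) => H)))

/-- The Koszul coboundary operator `B = T₁⊗c₁ + ⋯ + T_d⊗c_d` on `H ⊗ Λℂ^d`. -/
def DiracB {d : ℕ} (T : Fin d → H →L[ℂ] H) : FockH H d →L[ℂ] FockH H d :=
  ∑ k, tensorOp (T k) (create d k)

/-- The Dirac operator `D = B + B*` of a commuting `d`-tuple. -/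
def DiracD {d : ℕ} (T : Fin d → H →L[ℂ] H) : FockH H d →L[ℂ] FockH H d :=
  DiracB T + adjoint (DiracB T)

/-- `C(z) = 1_H ⊗ C₀(z)` on `H ⊗ Λℂ^d`. -/
def Cop (H : Type*) [NormedAddCommGroup H] [InnerProductSpace ℂ H] (d : ℕ)
    (z : EuclideanSpace ℂ (Fin d)) : FockH H d →L[ℂ] FockH H d :=
  tensorOp (1 : H →L[ℂ] H) (C0 d z)

/-- The canonical Clifford structure `R(z) = C(z) + C(z)*` on `H ⊗ Λℂ^d`. -/
def Rop (H : Type*) [NormedAddCommGroup H] [InnerProductSpace ℂ H] [CompleteSpace H] (d : ℕ)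
    (z : EuclideanSpace ℂ (Fin d)) : FockH H d →L[ℂ] FockH H d :=
  Cop H d z + adjoint (Cop H d z)

/-! If `B² = 0` then `⟪B x, B* x⟫ = ⟪B² x, x⟫ = 0`, so `‖D x‖² = ‖B x‖² + ‖B* x‖²`.
If `ran B = ker B`, the range is closed, and the open mapping theorem bounds `‖x‖` by a multiple
of `‖B x‖` on `(ker B)ᗮ` and by a multiple of `‖B* x‖` on `ker B = ran B`; hence the self-adjoint
operator `D` is bounded below, and so invertible. Conversely, if `D` is surjective and `B ξ = 0`,
write `ξ = B η + B* η`; then `B B* η = 0`, hence `B* η = 0` and `ξ = B η`.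
The Koszul coboundary squares to zero because the `Tₖ` commute while the `cₖ` anticommute. -/

open scoped InnerProductSpace

lemma le_of_sq_le_mul {a b : ℝ} (hb : 0 ≤ b) (h : a ^ 2 ≤ a * b) : a ≤ b := by
  nlinarith

section Hilbert

variable {𝕜 E F : Type*} [RCLike 𝕜]

lemma ContinuousLinearMap.exists_preimage_norm_le_of_isClosed_range
    [NormedAddCommGroup E] [NormedSpace 𝕜 E] [CompleteSpace E]
    [NormedAddCommGroup F] [NormedSpace 𝕜 F] [CompleteSpace F]
    (f : E →L[𝕜] F) (hf : IsClosed (Set.range f)) :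
    ∃ C > 0, ∀ y ∈ Set.range f, ∃ x, f x = y ∧ ‖x‖ ≤ C * ‖y‖ := by
  have : CompleteSpace f.range := hf.completeSpace_coe
  obtain ⟨C, hC, h⟩ := f.rangeRestrict.exists_preimage_norm_le
    fun ⟨y, x, hx⟩ ↦ ⟨x, Subtype.ext hx⟩
  refine ⟨C, hC, fun y hy ↦ ?_⟩
  obtain ⟨x, hx, hxC⟩ := h ⟨y, hy⟩
  exact ⟨x, congrArg Subtype.val hx, hxC⟩

variable [NormedAddCommGroup E] [InnerProductSpace 𝕜 E]
  [NormedAddCommGroup F] [InnerProductSpace 𝕜 F]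

lemma IsSelfAdjoint.isUnit_of_antilipschitz [CompleteSpace E] {A : E →L[𝕜] E}
    (hA : IsSelfAdjoint A) {c : NNReal} (hc : AntilipschitzWith c A) : IsUnit A := by
  rw [isUnit_iff_bijective, bijective_iff_dense_range_and_antilipschitz]
  refine ⟨?_, c, hc⟩
  rw [Submodule.topologicalClosure_eq_top_iff, orthogonal_range, hA.adjoint_eq,
    LinearMap.ker_eq_bot]
  exact hc.injective

namespace ContinuousLinearMap

variable {f : E →L[𝕜] F} {C : ℝ}

lemma norm_le_mul_norm_adjoint_apply_of_mem_range [CompleteSpace E] [CompleteSpace F]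
    (hC₀ : 0 ≤ C) (hC : ∀ y ∈ Set.range f, ∃ x, f x = y ∧ ‖x‖ ≤ C * ‖y‖)
    {y : F} (hy : y ∈ Set.range f) :
    ‖y‖ ≤ C * ‖adjoint f y‖ := by
  obtain ⟨x, rfl, hx⟩ := hC y hy
  refine le_of_sq_le_mul (by positivity) ?_
  calc ‖f x‖ ^ 2 = RCLike.re ⟪adjoint f (f x), x⟫_𝕜 := by
        rw [adjoint_inner_left, ← inner_self_eq_norm_sq (𝕜 := 𝕜)]
    _ ≤ ‖adjoint f (f x)‖ * ‖x‖ := re_inner_le_norm _ _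
    _ ≤ ‖adjoint f (f x)‖ * (C * ‖f x‖) := by gcongr
    _ = ‖f x‖ * (C * ‖adjoint f (f x)‖) := by ring

lemma norm_le_mul_norm_apply_of_mem_orthogonal_ker (hC₀ : 0 ≤ C)
    (hC : ∀ y ∈ Set.range f, ∃ x, f x = y ∧ ‖x‖ ≤ C * ‖y‖) {x : E}
    (hx : x ∈ (f.ker)ᗮ) : ‖x‖ ≤ C * ‖f x‖ := by
  obtain ⟨x', hx'x, hx'⟩ := hC (f x) ⟨x, rfl⟩
  have hker : x - x' ∈ f.ker := by simp [hx'x]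
  have hxx' : ⟪x, x - x'⟫_𝕜 = 0 := (Submodule.mem_orthogonal' _ _).1 hx _ hker
  rw [inner_sub_right, sub_eq_zero] at hxx'
  refine le_of_sq_le_mul (by positivity) ?_
  calc ‖x‖ ^ 2 = RCLike.re ⟪x, x'⟫_𝕜 := by rw [← hxx', inner_self_eq_norm_sq]
    _ ≤ ‖x‖ * ‖x'‖ := re_inner_le_norm _ _
    _ ≤ ‖x‖ * (C * ‖f x‖) := by gcongr

section SquareZero

variable [CompleteSpace E] {B : E →L[𝕜] E}

lemma inner_apply_adjoint_apply_eq_zero (hB : B * B = 0) (x : E) : ⟪B x, adjoint B x⟫_𝕜 = 0 := by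
  rw [adjoint_inner_right, ← mul_apply_eq_comp B B, hB, zero_apply, inner_zero_left]

lemma norm_add_adjoint_apply_sq (hB : B * B = 0) (x : E) :
    ‖(B + adjoint B) x‖ ^ 2 = ‖B x‖ ^ 2 + ‖adjoint B x‖ ^ 2 := by
  simpa only [add_apply, sq] using
    norm_add_sq_eq_norm_sq_add_norm_sq_of_inner_eq_zero _ _ (inner_apply_adjoint_apply_eq_zero hB x)

lemma norm_apply_le_norm_add_adjoint_apply (hB : B * B = 0) (x : E) :
    ‖B x‖ ≤ ‖(B + adjoint B) x‖ :=
  le_of_pow_le_pow_left₀ two_ne_zero (norm_nonneg _) <| by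
    rw [norm_add_adjoint_apply_sq hB]; exact le_add_of_nonneg_right (sq_nonneg _)

lemma norm_adjoint_apply_le_norm_add_adjoint_apply (hB : B * B = 0) (x : E) :
    ‖adjoint B x‖ ≤ ‖(B + adjoint B) x‖ :=
  le_of_pow_le_pow_left₀ two_ne_zero (norm_nonneg _) <| by
    rw [norm_add_adjoint_apply_sq hB]; exact le_add_of_nonneg_left (sq_nonneg _)

lemma range_eq_ker_of_isUnit_add_adjoint (hB : B * B = 0) (hD : IsUnit (B + adjoint B)) :
    Set.range B = {ξ | B ξ = 0} := by
  refine Set.Subset.antisymm (by rintro _ ⟨x, rfl⟩; exact congr($hB x)) fun ξ hξ ↦ ?_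
  obtain ⟨η, rfl⟩ := (isUnit_iff_bijective.1 hD).2 ξ
  have hBB : η ∈ (B ∘L adjoint B).ker := by
    rwa [Set.mem_ofPred_eq, add_apply, map_add, ← mul_apply_eq_comp B B, hB,
      zero_apply, zero_add] at hξ
  have : adjoint B η = 0 := by rwa [ker_self_comp_adjoint] at hBB
  exact ⟨η, by simp [this]⟩

lemma antilipschitz_add_adjoint_of_range_eq_ker (hB : B * B = 0)
    (h : Set.range B = {ξ | B ξ = 0}) : ∃ c, AntilipschitzWith c (B + adjoint B) := by
  obtain ⟨C, hC₀, hC⟩ := B.exists_preimage_norm_le_of_isClosed_range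
    (h ▸ isClosed_eq B.continuous continuous_const)
  have hrange : B.range = B.ker := SetLike.coe_injective h
  refine ⟨⟨2 * C, by positivity⟩, (B + adjoint B).antilipschitz_of_bound fun ξ ↦ ?_⟩
  obtain ⟨ξ₀, hξ₀, ξ₁, hξ₁, hξ⟩ := B.ker.exists_add_mem_mem_orthogonal ξ
  have hBξ₀ : B ξ₀ = 0 := hξ₀
  have hB'ξ₁ : adjoint B ξ₁ = 0 := by rwa [← hrange, orthogonal_range] at hξ₁
  have h₀ : ‖ξ₀‖ ≤ C * ‖adjoint B ξ‖ := by
    rw [hξ, map_add, hB'ξ₁, add_zero]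
    exact norm_le_mul_norm_adjoint_apply_of_mem_range hC₀.le hC (h ▸ hξ₀)
  have h₁ : ‖ξ₁‖ ≤ C * ‖B ξ‖ := by
    rw [hξ, map_add, hBξ₀, zero_add]
    exact norm_le_mul_norm_apply_of_mem_orthogonal_ker hC₀.le hC hξ₁
  calc ‖ξ‖ ≤ ‖ξ₀‖ + ‖ξ₁‖ := hξ ▸ norm_add_le _ _
    _ ≤ C * ‖adjoint B ξ‖ + C * ‖B ξ‖ := add_le_add h₀ h₁
    _ ≤ C * ‖(B + adjoint B) ξ‖ + C * ‖(B + adjoint B) ξ‖ := by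
      gcongr
      · exact norm_adjoint_apply_le_norm_add_adjoint_apply hB ξ
      · exact norm_apply_le_norm_add_adjoint_apply hB ξ
    _ = 2 * C * ‖(B + adjoint B) ξ‖ := by ring

theorem range_eq_ker_iff_isUnit_add_adjoint (hB : B * B = 0) :
    Set.range B = {ξ | B ξ = 0} ↔ IsUnit (B + adjoint B) := by
  refine ⟨fun h ↦ ?_, range_eq_ker_of_isUnit_add_adjoint hB⟩
  obtain ⟨c, hc⟩ := antilipschitz_add_adjoint_of_range_eq_ker hB h
  refine IsSelfAdjoint.isUnit_of_antilipschitz ?_ hc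
  rw [← star_eq_adjoint]
  exact IsSelfAdjoint.add_star_self B

end SquareZero

end ContinuousLinearMap

end Hilbert

lemma Finset.sum_sum_eq_zero_of_antisymm {ι M : Type*} [Fintype ι] [AddCommMonoid M]
    (f : ι → ι → M) (hf : ∀ i j, f i j + f j i = 0) (hdiag : ∀ i, f i i = 0) :
    ∑ i, ∑ j, f i j = 0 := by
  rw [← Finset.sum_product']
  refine Finset.sum_involution (fun p _ ↦ p.swap) (fun p _ ↦ hf _ _) (fun p _ hp hswap ↦ ?_)
    (fun _ _ ↦ Finset.mem_univ _) (fun _ _ ↦ rfl)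
  obtain ⟨i, j⟩ := p
  obtain rfl : j = i := congrArg Prod.fst hswap
  exact hp (hdiag j)

section Koszul

variable {V : Type*} [NormedAddCommGroup V] [InnerProductSpace ℂ V] {d : ℕ}

lemma create_apply (k : Fin d) (f : Fock d) (S : Finset (Fin d)) :
    create d k f S =
      if k ∈ S then (-1 : ℂ) ^ (S.filter (· < k)).card * f (S.erase k) else 0 := rfl

lemma create_mul_self (k : Fin d) : create d k * create d k = 0 := by
  ext f S
  by_cases hk : k ∈ S <;> simp [mul_apply_eq_comp, create_apply, hk]

lemma create_create_apply_of_lt {k l : Fin d} (hkl : k < l) (f : Fock d) (S : Finset (Fin d)) :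
    create d k (create d l f) S = - create d l (create d k f) S := by
  have hne : k ≠ l := hkl.ne
  by_cases hk : k ∈ S <;> by_cases hl : l ∈ S
  · rw [create_apply, if_pos hk, create_apply, if_pos (Finset.mem_erase.2 ⟨hne.symm, hl⟩),
      create_apply, if_pos hl, create_apply, if_pos (Finset.mem_erase.2 ⟨hne, hk⟩),
      Finset.erase_right_comm]
    have hsign_k : (S.erase l).filter (· < k) = S.filter (· < k) := by
      rw [Finset.filter_erase]
      exact Finset.erase_eq_of_notMem fun hmem ↦ (Finset.mem_filter.1 hmem).2.not_ge hkl.le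
    have hsign_l : ((S.erase k).filter (· < l)).card + 1 = (S.filter (· < l)).card := by
      rw [Finset.filter_erase]
      exact Finset.card_erase_add_one (Finset.mem_filter.2 ⟨hk, hkl⟩)
    rw [hsign_k, ← hsign_l, pow_succ]
    ring
  · simp [create_apply, hk, hl, Finset.mem_erase]
  · simp [create_apply, hk, hl, Finset.mem_erase]
  · simp [create_apply, hk, hl]

lemma create_anticomm (k l : Fin d) : create d k * create d l + create d l * create d k = 0 := by
  rcases lt_trichotomy k l with hkl | rfl | hkl
  · ext f S
    simp [mul_apply_eq_comp, create_create_apply_of_lt hkl]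
  · rw [create_mul_self, add_zero]
  · ext f S
    simp [mul_apply_eq_comp, create_create_apply_of_lt hkl]

lemma Fock.apply_apply_eq_sum (A : Fock d →L[ℂ] Fock d) (g : Fock d) (S : Finset (Fin d)) :
    A g S = ∑ S', g S' * A (EuclideanSpace.single S' 1) S := by
  conv_lhs => rw [← (EuclideanSpace.basisFun (Finset (Fin d)) ℂ).sum_repr g]
  simp

lemma tensorOp_apply (T : V →L[ℂ] V) (A : Fock d →L[ℂ] Fock d) (x : FockH V d)
    (S : Finset (Fin d)) :
    tensorOp T A x S = ∑ S', A (EuclideanSpace.single S' 1) S • T (x S') := by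
  simp [tensorOp]

lemma tensorOp_mul (T T' : V →L[ℂ] V) (A A' : Fock d →L[ℂ] Fock d) :
    tensorOp T A * tensorOp T' A' = tensorOp (T * T') (A * A') := by
  ext x S
  simp only [mul_apply_eq_comp, tensorOp_apply, map_sum, map_smul, Finset.smul_sum, smul_smul]
  rw [Finset.sum_comm]
  refine Finset.sum_congr rfl fun S'' _ ↦ ?_
  rw [Fock.apply_apply_eq_sum A, Finset.sum_smul]
  simp only [mul_comm]

lemma tensorOp_add_right (T : V →L[ℂ] V) (A A' : Fock d →L[ℂ] Fock d) :
    tensorOp T (A + A') = tensorOp T A + tensorOp T A' := by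
  ext x S
  simp [tensorOp_apply, add_smul, Finset.sum_add_distrib]

lemma tensorOp_zero_right (T : V →L[ℂ] V) : tensorOp (d := d) T 0 = 0 := by
  ext x S
  simp [tensorOp_apply]

lemma DiracB_mul_self (T : Fin d → V →L[ℂ] V) (hT : ∀ i j, T i * T j = T j * T i) :
    DiracB T * DiracB T = 0 := by
  rw [DiracB, Finset.sum_mul_sum]
  simp only [tensorOp_mul]
  refine Finset.sum_sum_eq_zero_of_antisymm _ (fun k l ↦ ?_) fun k ↦ ?_
  · rw [hT l k, ← tensorOp_add_right, create_anticomm, tensorOp_zero_right]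
  · rw [create_mul_self, tensorOp_zero_right]

end Koszul

/-- For a bounded operator `B` with `B² = 0`, the range of `B` is closed
and equals `ker B` iff `D = B + B*` is invertible; consequently a commuting `d`-tuple is
Taylor invertible iff its Dirac operator is invertible. -/
theorem arveson_stmt13 {K : Type*} [NormedAddCommGroup K] [InnerProductSpace ℂ K]
    [CompleteSpace K] (B : K →L[ℂ] K) (hB : B * B = 0)
    {d : ℕ} (T : Fin d → H →L[ℂ] H) (hT : ∀ i j, T i * T j = T j * T i) :
    (Set.range B = {ξ | B ξ = 0} ↔ IsUnit (B + ContinuousLinearMap.adjoint B)) ∧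
    (Set.range (DiracB T) = {ξ | DiracB T ξ = 0} ↔ IsUnit (DiracD T)) :=
  ⟨range_eq_ker_iff_isUnit_add_adjoint hB,
    range_eq_ker_iff_isUnit_add_adjoint (DiracB_mul_self T hT)⟩

end
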